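/- Consider the time-varying MPC setup: fix real matrices A (n×n), B (n×m), a horizon T ≥ 1, a real δ ∈ [0,1), and sequences (Q_t)_{t∈ℕ} of symmetric positive definite n×n matrices and (R_t)_{t∈ℕ} of symmetric positive definite m×m matrices satisfying (1−δ)Q_t ⪯ Q_{t+1} ⪯ (1+δ)Q_t and (1−δ)R_t ⪯ R_{t+1} ⪯ (1+δ)R_t for all t. For weights (Q,R) let P_k(Q,R) be the Riccati iterates with P_0 = 0 and P_{k+1} = AᵀP_kA − AᵀP_kB(BᵀP_kB+R)⁻¹BᵀP_kA + Q, and let the MPC closed-loop trajectory from x_0 be x_{t+1} = Ax_t + Bû_t with û_t = −(BᵀP_{T−1}(Q_t,R_t)B+R_t)⁻¹BᵀP_{T−1}(Q_t,R_t)A x_t. Suppose ρ ∈ (0,1) satisfies ρ·P_T(Q_t,R_t) ⪯ Q_t for all t, and α > 1 satisfies P_T(Q_t,R_t) ⪯ α·P_{T−1}(Q_t,R_t) for all t. Set γ = (1−ρ)α/(1−δ). Then for every t ∈ ℕ, x_{t+1}ᵀP_T(Q_{t+1},R_{t+1})x_{t+1} ≤ γ · x_tᵀP_T(Q_t,R_t)x_t.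 -/

import Mathlib

/-!
The Riccati iterates are monotone in the weights `(Q, R)` and homogeneous of degree one in them,
so the drift bound `Q_{t+1} ⪯ (1 + δ) Q_t ⪯ (1 - δ)⁻¹ Q_t` (and likewise for `R`) gives
`P_T(Q_{t+1}, R_{t+1}) ⪯ (1 - δ)⁻¹ P_T(Q_t, R_t)`. Along the MPC feedback, the Bellman identity
`x_tᵀ P_T x_t = x_tᵀ Q_t x_t + u_tᵀ R_t u_t + x_{t+1}ᵀ P_{T-1} x_{t+1}` and `ρ P_T ⪯ Q_t` give
`x_{t+1}ᵀ P_{T-1} x_{t+1} ≤ (1 - ρ) x_tᵀ P_T x_t`, and `P_T ⪯ α P_{T-1}` links the two horizons.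
-/

open Matrix

/-- The finite-horizon Riccati iteration with `P 0 = 0` and
`P (k+1) = AᵀP_kA − AᵀP_kB(BᵀP_kB+R)⁻¹BᵀP_kA + Q`. -/
noncomputable def riccati {n m : ℕ} (A : Matrix (Fin n) (Fin n) ℝ)
    (B : Matrix (Fin n) (Fin m) ℝ) (Q : Matrix (Fin n) (Fin n) ℝ)
    (R : Matrix (Fin m) (Fin m) ℝ) : ℕ → Matrix (Fin n) (Fin n) ℝ
  | 0 => 0
  | k + 1 =>
      Aᵀ * riccati A B Q R k * A -
        Aᵀ * riccati A B Q R k * B * (Bᵀ * riccati A B Q R k * B + R)⁻¹ *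
          Bᵀ * riccati A B Q R k * A + Q

/-- The Loewner order on real square matrices: `X ⪯ Y` iff `Y − X` is positive semidefinite. -/
def loewnerLE {n : ℕ} (X Y : Matrix (Fin n) (Fin n) ℝ) : Prop := (Y - X).PosSemidef

open scoped MatrixOrder

theorem loewnerLE_iff_le {n : ℕ} {X Y : Matrix (Fin n) (Fin n) ℝ} : loewnerLE X Y ↔ X ≤ Y :=
  Iff.rfl

namespace Matrix

variable {ι κ : Type*} [Fintype κ]

theorem inv_smul_of_ne_zero {K : Type*} [Field K] [DecidableEq κ] (M : Matrix κ κ K) {c : K}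
    (hc : c ≠ 0) : (c • M)⁻¹ = c⁻¹ • M⁻¹ := by
  by_cases hM : IsUnit M.det
  · exact inv_smul' _ (Units.mk0 c hc) hM
  · have hcM : ¬IsUnit (c • M).det := by simpa [det_smul, hc] using hM
    rw [nonsing_inv_apply_not_isUnit _ hM, nonsing_inv_apply_not_isUnit _ hcM, smul_zero]

theorem transpose_mul_mul_sub_inv_mul {𝕜 : Type*} [CommRing 𝕜] [DecidableEq κ]
    {M : Matrix κ κ 𝕜} (hM : IsUnit M.det) (hMt : Mᵀ = M) (K G : Matrix κ ι 𝕜) :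
    (K - M⁻¹ * G)ᵀ * M * (K - M⁻¹ * G) = Kᵀ * M * K - Kᵀ * G - Gᵀ * K + Gᵀ * M⁻¹ * G := by
  have hMinvt : M⁻¹ᵀ = M⁻¹ := by rw [transpose_nonsing_inv, hMt]
  simp only [transpose_sub, transpose_mul, hMinvt, Matrix.sub_mul, Matrix.mul_sub,
    Matrix.mul_assoc, mul_nonsing_inv_cancel_left _ _ hM, nonsing_inv_mul_cancel_left _ _ hM]
  abel

variable [Fintype ι]

theorem transpose_mul_mul_le_transpose_mul_mul {X Y : Matrix ι ι ℝ} (h : X ≤ Y)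
    (C : Matrix ι κ ℝ) : Cᵀ * X * C ≤ Cᵀ * Y * C := by
  rw [le_iff, ← Matrix.sub_mul, ← Matrix.mul_sub]
  simpa using (le_iff.mp h).conjTranspose_mul_mul_same C

theorem dotProduct_mulVec_le_dotProduct_mulVec {X Y : Matrix ι ι ℝ} (h : X ≤ Y) (v : ι → ℝ) :
    v ⬝ᵥ (X *ᵥ v) ≤ v ⬝ᵥ (Y *ᵥ v) := by
  simpa [sub_mulVec] using (le_iff.mp h).dotProduct_mulVec_nonneg v

theorem dotProduct_mulVec_le_mul_dotProduct_mulVec {X Y : Matrix ι ι ℝ} {c : ℝ} (h : X ≤ c • Y)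
    (v : ι → ℝ) : v ⬝ᵥ (X *ᵥ v) ≤ c * (v ⬝ᵥ (Y *ᵥ v)) := by
  simpa only [smul_mulVec, dotProduct_smul, smul_eq_mul] using
    dotProduct_mulVec_le_dotProduct_mulVec h v

theorem dotProduct_transpose_mul_mul_mulVec {𝕜 : Type*} [CommSemiring 𝕜] (C : Matrix ι κ 𝕜)
    (X : Matrix ι ι 𝕜) (v : κ → 𝕜) :
    v ⬝ᵥ ((Cᵀ * X * C) *ᵥ v) = (C *ᵥ v) ⬝ᵥ (X *ᵥ (C *ᵥ v)) := by
  rw [← mulVec_mulVec, ← mulVec_mulVec, dotProduct_mulVec, vecMul_transpose]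

end Matrix

section RiccatiStep

variable {ι κ : Type*} [Fintype ι] [Fintype κ] (A : Matrix ι ι ℝ) (B : Matrix ι κ ℝ)

theorem posDef_transpose_mul_mul_add {P : Matrix ι ι ℝ} {R : Matrix κ κ ℝ}
    (hP : P.PosSemidef) (hR : R.PosDef) : (Bᵀ * P * B + R).PosDef := by
  simpa using PosDef.posSemidef_add (hP.conjTranspose_mul_mul_same B) hR

variable [DecidableEq κ]

noncomputable def riccatiStep (Q : Matrix ι ι ℝ) (R : Matrix κ κ ℝ) (P : Matrix ι ι ℝ) :
    Matrix ι ι ℝ :=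
  Aᵀ * P * A - Aᵀ * P * B * (Bᵀ * P * B + R)⁻¹ * Bᵀ * P * A + Q

noncomputable def riccatiGain (R : Matrix κ κ ℝ) (P : Matrix ι ι ℝ) : Matrix κ ι ℝ :=
  (Bᵀ * P * B + R)⁻¹ * Bᵀ * P * A

/-- Completion of the square in the feedback gain `K`. -/
theorem closedLoop_eq_riccatiStep_add {P Q : Matrix ι ι ℝ} {R : Matrix κ κ ℝ}
    (hP : P.PosSemidef) (hR : R.PosDef) (K : Matrix κ ι ℝ) :
    (A - B * K)ᵀ * P * (A - B * K) + Kᵀ * R * K + Q =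
      riccatiStep A B Q R P + (K - riccatiGain A B R P)ᵀ * (Bᵀ * P * B + R) *
        (K - riccatiGain A B R P) := by
  have hPt : Pᵀ = P := by simpa using hP.isHermitian.eq
  have hRt : Rᵀ = R := by simpa using hR.isHermitian.eq
  have hMt : (Bᵀ * P * B + R)ᵀ = Bᵀ * P * B + R := by
    simp [transpose_add, transpose_mul, hPt, hRt, Matrix.mul_assoc]
  have hGt : (Bᵀ * P * A)ᵀ = Aᵀ * P * B := by simp [transpose_mul, hPt, Matrix.mul_assoc]
  have hgain : riccatiGain A B R P = (Bᵀ * P * B + R)⁻¹ * (Bᵀ * P * A) := by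
    simp only [riccatiGain, Matrix.mul_assoc]
  rw [hgain, transpose_mul_mul_sub_inv_mul
    ((posDef_transpose_mul_mul_add B hP hR).isUnit.map detMonoidHom) hMt, hGt, riccatiStep]
  simp only [transpose_sub, transpose_mul, Matrix.sub_mul, Matrix.mul_sub, Matrix.add_mul,
    Matrix.mul_add, Matrix.mul_assoc]
  abel

theorem riccatiStep_eq_closedLoop {P Q : Matrix ι ι ℝ} {R : Matrix κ κ ℝ}
    (hP : P.PosSemidef) (hR : R.PosDef) :
    riccatiStep A B Q R P =
      (A - B * riccatiGain A B R P)ᵀ * P * (A - B * riccatiGain A B R P) +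
        (riccatiGain A B R P)ᵀ * R * riccatiGain A B R P + Q := by
  rw [closedLoop_eq_riccatiStep_add A B hP hR, sub_self]
  simp

theorem riccatiStep_le_closedLoop {P Q : Matrix ι ι ℝ} {R : Matrix κ κ ℝ}
    (hP : P.PosSemidef) (hR : R.PosDef) (K : Matrix κ ι ℝ) :
    riccatiStep A B Q R P ≤ (A - B * K)ᵀ * P * (A - B * K) + Kᵀ * R * K + Q := by
  rw [closedLoop_eq_riccatiStep_add A B hP hR]
  refine le_add_of_nonneg_right (PosSemidef.nonneg ?_)
  simpa using (posDef_transpose_mul_mul_add B hP hR).posSemidef.conjTranspose_mul_mul_same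
    (K - riccatiGain A B R P)

theorem riccatiStep_posSemidef {P Q : Matrix ι ι ℝ} {R : Matrix κ κ ℝ}
    (hP : P.PosSemidef) (hQ : Q.PosSemidef) (hR : R.PosDef) :
    (riccatiStep A B Q R P).PosSemidef := by
  rw [riccatiStep_eq_closedLoop A B hP hR]
  refine (PosSemidef.add ?_ ?_).add hQ
  · simpa using hP.conjTranspose_mul_mul_same (A - B * riccatiGain A B R P)
  · simpa using hR.posSemidef.conjTranspose_mul_mul_same (riccatiGain A B R P)

theorem riccatiStep_mono {P₁ P₂ Q₁ Q₂ : Matrix ι ι ℝ} {R₁ R₂ : Matrix κ κ ℝ}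
    (hP₁ : P₁.PosSemidef) (hR₁ : R₁.PosDef) (hP : P₁ ≤ P₂) (hQ : Q₁ ≤ Q₂) (hR : R₁ ≤ R₂) :
    riccatiStep A B Q₁ R₁ P₁ ≤ riccatiStep A B Q₂ R₂ P₂ := by
  have hP₂ : P₂.PosSemidef := (hP₁.nonneg.trans hP).posSemidef
  have hR₂ : R₂.PosDef := by
    simpa using hR₁.add_posSemidef (le_iff.mp hR)
  set K := riccatiGain A B R₂ P₂
  calc riccatiStep A B Q₁ R₁ P₁
      ≤ (A - B * K)ᵀ * P₁ * (A - B * K) + Kᵀ * R₁ * K + Q₁ :=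
        riccatiStep_le_closedLoop A B hP₁ hR₁ K
    _ ≤ (A - B * K)ᵀ * P₂ * (A - B * K) + Kᵀ * R₂ * K + Q₂ :=
        add_le_add (add_le_add (transpose_mul_mul_le_transpose_mul_mul hP _)
          (transpose_mul_mul_le_transpose_mul_mul hR K)) hQ
    _ = riccatiStep A B Q₂ R₂ P₂ := (riccatiStep_eq_closedLoop A B hP₂ hR₂).symm

theorem riccatiStep_smul (Q : Matrix ι ι ℝ) (R : Matrix κ κ ℝ) (P : Matrix ι ι ℝ) {c : ℝ}
    (hc : c ≠ 0) : riccatiStep A B (c • Q) (c • R) (c • P) = c • riccatiStep A B Q R P := by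
  have hM : Bᵀ * (c • P) * B + c • R = c • (Bᵀ * P * B + R) := by
    simp only [Matrix.mul_smul, Matrix.smul_mul, smul_add]
  rw [riccatiStep, riccatiStep, hM, inv_smul_of_ne_zero _ hc]
  simp only [Matrix.mul_smul, Matrix.smul_mul,
    smul_smul, smul_sub, smul_add]
  field_simp

theorem dotProduct_riccatiStep_mulVec {P Q : Matrix ι ι ℝ} {R : Matrix κ κ ℝ}
    (hP : P.PosSemidef) (hR : R.PosDef) {x : ι → ℝ} {u : κ → ℝ}
    (hu : u = -(riccatiGain A B R P *ᵥ x)) :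
    x ⬝ᵥ (riccatiStep A B Q R P *ᵥ x) =
      x ⬝ᵥ (Q *ᵥ x) + u ⬝ᵥ (R *ᵥ u) + (A *ᵥ x + B *ᵥ u) ⬝ᵥ (P *ᵥ (A *ᵥ x + B *ᵥ u)) := by
  have hsucc : A *ᵥ x + B *ᵥ u = (A - B * riccatiGain A B R P) *ᵥ x := by
    rw [hu, mulVec_neg, mulVec_mulVec, sub_mulVec, sub_eq_add_neg]
  rw [riccatiStep_eq_closedLoop A B hP hR, add_mulVec, add_mulVec, dotProduct_add,
    dotProduct_add, dotProduct_transpose_mul_mul_mulVec, dotProduct_transpose_mul_mul_mulVec,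
    ← hsucc, hu]
  simp only [dotProduct_neg, neg_dotProduct, mulVec_neg, neg_neg]
  ring

end RiccatiStep

section Riccati

variable {n m : ℕ} (A : Matrix (Fin n) (Fin n) ℝ) (B : Matrix (Fin n) (Fin m) ℝ)

theorem riccati_succ (Q : Matrix (Fin n) (Fin n) ℝ) (R : Matrix (Fin m) (Fin m) ℝ) (k : ℕ) :
    riccati A B Q R (k + 1) = riccatiStep A B Q R (riccati A B Q R k) :=
  rfl

theorem riccati_posSemidef {Q : Matrix (Fin n) (Fin n) ℝ} {R : Matrix (Fin m) (Fin m) ℝ}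
    (hQ : Q.PosSemidef) (hR : R.PosDef) (k : ℕ) : (riccati A B Q R k).PosSemidef := by
  induction k with
  | zero => exact PosSemidef.zero
  | succ k ih => exact riccatiStep_posSemidef A B ih hQ hR

theorem riccati_mono {Q₁ Q₂ : Matrix (Fin n) (Fin n) ℝ} {R₁ R₂ : Matrix (Fin m) (Fin m) ℝ}
    (hQ₁ : Q₁.PosSemidef) (hR₁ : R₁.PosDef) (hQ : Q₁ ≤ Q₂) (hR : R₁ ≤ R₂) (k : ℕ) :
    riccati A B Q₁ R₁ k ≤ riccati A B Q₂ R₂ k := by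
  induction k with
  | zero => exact le_rfl
  | succ k ih => exact riccatiStep_mono A B (riccati_posSemidef A B hQ₁ hR₁ k) hR₁ ih hQ hR

theorem riccati_smul (Q : Matrix (Fin n) (Fin n) ℝ) (R : Matrix (Fin m) (Fin m) ℝ) {c : ℝ}
    (hc : c ≠ 0) (k : ℕ) : riccati A B (c • Q) (c • R) k = c • riccati A B Q R k := by
  induction k with
  | zero => simp [riccati]
  | succ k ih => rw [riccati_succ, riccati_succ, ih, riccatiStep_smul A B Q R _ hc]

theorem riccati_le_smul {Q₁ Q₂ : Matrix (Fin n) (Fin n) ℝ} {R₁ R₂ : Matrix (Fin m) (Fin m) ℝ}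
    (hQ₁ : Q₁.PosSemidef) (hR₁ : R₁.PosDef) {c : ℝ} (hc : c ≠ 0) (hQ : Q₁ ≤ c • Q₂)
    (hR : R₁ ≤ c • R₂) (k : ℕ) : riccati A B Q₁ R₁ k ≤ c • riccati A B Q₂ R₂ k := by
  rw [← riccati_smul A B _ _ hc]
  exact riccati_mono A B hQ₁ hR₁ hQ hR k

theorem dotProduct_riccati_mulVec_closedLoop_le {Q : Matrix (Fin n) (Fin n) ℝ}
    {R : Matrix (Fin m) (Fin m) ℝ} (hQ : Q.PosSemidef) (hR : R.PosDef) {k : ℕ} {ρ : ℝ}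
    (hρ : ρ • riccati A B Q R (k + 1) ≤ Q) {x : Fin n → ℝ} {u : Fin m → ℝ}
    (hu : u = -(riccatiGain A B R (riccati A B Q R k) *ᵥ x)) :
    (A *ᵥ x + B *ᵥ u) ⬝ᵥ (riccati A B Q R k *ᵥ (A *ᵥ x + B *ᵥ u)) ≤
      (1 - ρ) * (x ⬝ᵥ (riccati A B Q R (k + 1) *ᵥ x)) := by
  have hvalue := dotProduct_riccatiStep_mulVec A B (Q := Q) (riccati_posSemidef A B hQ hR k)
    hR hu
  have hstate := dotProduct_mulVec_le_dotProduct_mulVec hρ x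
  have hinput : 0 ≤ u ⬝ᵥ (R *ᵥ u) := by simpa using hR.posSemidef.dotProduct_mulVec_nonneg u
  rw [smul_mulVec, dotProduct_smul, smul_eq_mul] at hstate
  rw [riccati_succ] at hstate ⊢
  linarith

end Riccati

theorem mpc_value_contraction_general {n m : ℕ}
    (A : Matrix (Fin n) (Fin n) ℝ) (B : Matrix (Fin n) (Fin m) ℝ)
    (T : ℕ) (hT : 1 ≤ T) (δ : ℝ) (hδ1 : δ < 1)
    (Q : ℕ → Matrix (Fin n) (Fin n) ℝ) (R : ℕ → Matrix (Fin m) (Fin m) ℝ)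
    (hQpd : ∀ t, (Q t).PosDef) (hRpd : ∀ t, (R t).PosDef)
    (hQhigh : ∀ t, loewnerLE (Q (t + 1)) ((1 + δ) • Q t))
    (hRhigh : ∀ t, loewnerLE (R (t + 1)) ((1 + δ) • R t))
    (x : ℕ → Fin n → ℝ) (u : ℕ → Fin m → ℝ)
    (hu : ∀ t, u t = -(((Bᵀ * riccati A B (Q t) (R t) (T - 1) * B + R t)⁻¹ *
        Bᵀ * riccati A B (Q t) (R t) (T - 1) * A) *ᵥ x t))
    (hx : ∀ t, x (t + 1) = A *ᵥ x t + B *ᵥ u t)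
    (ρ : ℝ)
    (hρP : ∀ t, loewnerLE (ρ • riccati A B (Q t) (R t) T) (Q t))
    (α : ℝ) (hα : 1 < α)
    (hαP : ∀ t, loewnerLE (riccati A B (Q t) (R t) T)
      (α • riccati A B (Q t) (R t) (T - 1)))
    (γ : ℝ) (hγ : γ = (1 - ρ) * α / (1 - δ)) :
    ∀ t : ℕ,
      x (t + 1) ⬝ᵥ (riccati A B (Q (t + 1)) (R (t + 1)) T *ᵥ x (t + 1)) ≤
        γ * (x t ⬝ᵥ (riccati A B (Q t) (R t) T *ᵥ x t)) := by
  obtain ⟨k, rfl⟩ : ∃ k, T = k + 1 := ⟨T - 1, by omega⟩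
  simp only [Nat.add_sub_cancel, loewnerLE_iff_le] at hu hQhigh hRhigh hρP hαP
  intro t
  have hδ : 0 < 1 - δ := by linarith
  have hδinv : 1 + δ ≤ (1 - δ)⁻¹ := by
    rw [← one_div, le_div_iff₀ hδ]
    nlinarith [sq_nonneg δ]
  have hQ : Q (t + 1) ≤ (1 - δ)⁻¹ • Q t :=
    (hQhigh t).trans (smul_le_smul_of_nonneg_right hδinv (hQpd t).posSemidef.nonneg)
  have hR : R (t + 1) ≤ (1 - δ)⁻¹ • R t :=
    (hRhigh t).trans (smul_le_smul_of_nonneg_right hδinv (hRpd t).posSemidef.nonneg)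
  have hP := riccati_le_smul A B (hQpd (t + 1)).posSemidef (hRpd (t + 1)) (inv_ne_zero hδ.ne')
    hQ hR (k + 1)
  have hdecrease := dotProduct_riccati_mulVec_closedLoop_le A B (hQpd t).posSemidef (hRpd t)
    (hρP t) (hu t)
  rw [← hx t] at hdecrease
  calc _ ≤ (1 - δ)⁻¹ * (x (t + 1) ⬝ᵥ (riccati A B (Q t) (R t) (k + 1) *ᵥ x (t + 1))) :=
        dotProduct_mulVec_le_mul_dotProduct_mulVec hP _
    _ ≤ (1 - δ)⁻¹ * (α * (x (t + 1) ⬝ᵥ (riccati A B (Q t) (R t) k *ᵥ x (t + 1)))) :=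
        mul_le_mul_of_nonneg_left (dotProduct_mulVec_le_mul_dotProduct_mulVec (hαP t) _)
          (inv_nonneg.mpr hδ.le)
    _ ≤ (1 - δ)⁻¹ * (α * ((1 - ρ) * (x t ⬝ᵥ (riccati A B (Q t) (R t) (k + 1) *ᵥ x t)))) := by
        gcongr
    _ = γ * (x t ⬝ᵥ (riccati A B (Q t) (R t) (k + 1) *ᵥ x t)) := by
        rw [hγ]
        field_simp

/-- Appendix Lemma 2(a): the horizon-`T` MPC value function contracts by the factor
`γ = (1−ρ)α/(1−δ)` along the MPC closed-loop trajectory. -/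
theorem mpc_value_contraction {n m : ℕ}
    (A : Matrix (Fin n) (Fin n) ℝ) (B : Matrix (Fin n) (Fin m) ℝ)
    (T : ℕ) (hT : 1 ≤ T) (δ : ℝ) (hδ0 : 0 ≤ δ) (hδ1 : δ < 1)
    (Q : ℕ → Matrix (Fin n) (Fin n) ℝ) (R : ℕ → Matrix (Fin m) (Fin m) ℝ)
    (hQpd : ∀ t, (Q t).PosDef) (hRpd : ∀ t, (R t).PosDef)
    (hQlow : ∀ t, loewnerLE ((1 - δ) • Q t) (Q (t + 1)))
    (hQhigh : ∀ t, loewnerLE (Q (t + 1)) ((1 + δ) • Q t))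
    (hRlow : ∀ t, loewnerLE ((1 - δ) • R t) (R (t + 1)))
    (hRhigh : ∀ t, loewnerLE (R (t + 1)) ((1 + δ) • R t))
    (x : ℕ → Fin n → ℝ) (u : ℕ → Fin m → ℝ)
    (hu : ∀ t, u t = -(((Bᵀ * riccati A B (Q t) (R t) (T - 1) * B + R t)⁻¹ *
        Bᵀ * riccati A B (Q t) (R t) (T - 1) * A) *ᵥ x t))
    (hx : ∀ t, x (t + 1) = A *ᵥ x t + B *ᵥ u t)
    (ρ : ℝ) (hρ0 : 0 < ρ) (hρ1 : ρ < 1)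
    (hρP : ∀ t, loewnerLE (ρ • riccati A B (Q t) (R t) T) (Q t))
    (α : ℝ) (hα : 1 < α)
    (hαP : ∀ t, loewnerLE (riccati A B (Q t) (R t) T)
      (α • riccati A B (Q t) (R t) (T - 1)))
    (γ : ℝ) (hγ : γ = (1 - ρ) * α / (1 - δ)) :
    ∀ t : ℕ,
      x (t + 1) ⬝ᵥ (riccati A B (Q (t + 1)) (R (t + 1)) T *ᵥ x (t + 1)) ≤
        γ * (x t ⬝ᵥ (riccati A B (Q t) (R t) T *ᵥ x t)) :=
  mpc_value_contraction_general A B T hT δ hδ1 Q R hQpd hRpd hQhigh hRhigh x u hu hx ρ hρP α hα hαP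
    γ hγ
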